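/- arXiv:1806.06289 — 2 statements merged into one kernel-verified Lean document; each statement's English description precedes it below -/
import Mathlib

section
/- The two smooth plane quartic curves over ℚ defined by f = x³y + x³z + x²y² − 2x²yz − 4x²z² − 4xy³ + xz³ + 2y⁴ − 2yz³ + z⁴ and g = x⁴ + x³y + 2x³z + 4x²y² − xy³ − 2xy²z + y⁴ + 3y³z + 5y²z² + 4yz³ + 2z⁴ are isomorphic over ℚ(i): substituting (x, y, z) ↦ (z, ix, (1−i)x/2 − y) into g yields a nonzero ℚ(i)-scalar multiple of f (in fact the substitution map and its stated inverse (x,y,z) ↦ (iy, (1+i)y/2 + z, −x) are mutually inverse linear maps). -/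
open MvPolynomial Complex

/-!
Both claims are identities in `i` that hold modulo `i ^ 2 + 1`, so they hold over any field
containing a square root of `-1` (for the quartics, one of characteristic zero, where `1 / 2`
exists and a polynomial is determined by its values). The substitution carries `g` to `f`
itself, and the two matrix products are both `-1`.
-/

section Quartics

variable {R : Type*} [CommRing R]

noncomputable def quarticF : MvPolynomial (Fin 3) R :=
  X 0 ^ 3 * X 1 + X 0 ^ 3 * X 2 + X 0 ^ 2 * X 1 ^ 2 - 2 * X 0 ^ 2 * X 1 * X 2
    - 4 * X 0 ^ 2 * X 2 ^ 2 - 4 * X 0 * X 1 ^ 3 + X 0 * X 2 ^ 3 + 2 * X 1 ^ 4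
    - 2 * X 1 * X 2 ^ 3 + X 2 ^ 4

noncomputable def quarticG : MvPolynomial (Fin 3) R :=
  X 0 ^ 4 + X 0 ^ 3 * X 1 + 2 * X 0 ^ 3 * X 2 + 4 * X 0 ^ 2 * X 1 ^ 2
    - X 0 * X 1 ^ 3 - 2 * X 0 * X 1 ^ 2 * X 2 + X 1 ^ 4 + 3 * X 1 ^ 3 * X 2
    + 5 * X 1 ^ 2 * X 2 ^ 2 + 4 * X 1 * X 2 ^ 3 + 2 * X 2 ^ 4

end Quartics

variable {K : Type*} [Field K]

noncomputable def quarticSubst (i : K) : Fin 3 → MvPolynomial (Fin 3) K :=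
  ![X 2, C i * X 0, C ((1 - i) / 2) * X 0 - X 1]

def substMatrix (i : K) : Matrix (Fin 3) (Fin 3) K :=
  !![0, 0, 1; i, 0, 0; (1 - i) / 2, -1, 0]

def substMatrixInv (i : K) : Matrix (Fin 3) (Fin 3) K :=
  !![0, i, 0; 0, (1 + i) / 2, 1; -1, 0, 0]

theorem bind₁_quarticSubst_quarticG [CharZero K] {i : K} (hi : i ^ 2 = -1) :
    bind₁ (quarticSubst i) quarticG = quarticF := by
  refine MvPolynomial.funext fun v => ?_
  simp only [quarticSubst, quarticG, quarticF, map_add, map_sub, map_mul, map_pow, map_ofNat,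
    bind₁_X_right, Matrix.cons_val_zero, Matrix.cons_val_one, Matrix.cons_val_two,
    Matrix.head_cons, Matrix.tail_cons, eval_X, eval_C]
  linear_combination (v 0 ^ 2 * (2 * v 1 ^ 2 + 2 * v 1 * v 2 + 4 * v 2 ^ 2)
    - v 0 ^ 3 * (2 * v 1 + v 2) + v 0 ^ 4 * (3 * i ^ 2 + 1) / 8) * hi

theorem substMatrix_mul_substMatrixInv {i : K} (hi : i ^ 2 = -1) :
    substMatrix i * substMatrixInv i = -1 := by
  have h₁ : i * i = -1 := by linear_combination hi
  have h₂ : (1 - i) / 2 * i + -((1 + i) / 2) = 0 := by linear_combination -hi / 2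
  rw [substMatrix, substMatrixInv, Matrix.mul_fin_three, Matrix.one_fin_three]
  simpa using ⟨h₁, h₂⟩

theorem substMatrixInv_mul_substMatrix {i : K} (hi : i ^ 2 = -1) :
    substMatrixInv i * substMatrix i = -1 := by
  have h₁ : i * i = -1 := by linear_combination hi
  have h₂ : (1 + i) / 2 * i + (1 - i) / 2 = 0 := by linear_combination hi / 2
  rw [substMatrix, substMatrixInv, Matrix.mul_fin_three, Matrix.one_fin_three]
  simpa using ⟨h₁, h₂⟩

/-- The smooth plane quartics `f = 0` and `g = 0` become isomorphic over `ℚ(i) ⊆ ℂ`: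
substituting `(x,y,z) ↦ (z, ix, (1−i)x/2 − y)` into `g` yields a nonzero scalar multiple
of `f`, and the substitution matrix and its stated inverse `(x,y,z) ↦ (iy, (1+i)y/2+z, −x)`
are mutually inverse as projective linear maps (their products are a nonzero scalar times
the identity). -/
theorem stmt_7 :
    (∃ c : ℂ, c ≠ 0 ∧
      bind₁ (![X 2, C I * X 0, C ((1 - I) / 2) * X 0 - X 1] : Fin 3 → MvPolynomial (Fin 3) ℂ)
        (X 0 ^ 4 + X 0 ^ 3 * X 1 + 2 * X 0 ^ 3 * X 2 + 4 * X 0 ^ 2 * X 1 ^ 2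
          - X 0 * X 1 ^ 3 - 2 * X 0 * X 1 ^ 2 * X 2 + X 1 ^ 4 + 3 * X 1 ^ 3 * X 2
          + 5 * X 1 ^ 2 * X 2 ^ 2 + 4 * X 1 * X 2 ^ 3 + 2 * X 2 ^ 4 :
          MvPolynomial (Fin 3) ℂ) =
      C c * (X 0 ^ 3 * X 1 + X 0 ^ 3 * X 2 + X 0 ^ 2 * X 1 ^ 2 - 2 * X 0 ^ 2 * X 1 * X 2
        - 4 * X 0 ^ 2 * X 2 ^ 2 - 4 * X 0 * X 1 ^ 3 + X 0 * X 2 ^ 3 + 2 * X 1 ^ 4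
        - 2 * X 1 * X 2 ^ 3 + X 2 ^ 4)) ∧
    (∃ c' : ℂ, c' ≠ 0 ∧
      (!![0, 0, 1; I, 0, 0; (1 - I) / 2, -1, 0] : Matrix (Fin 3) (Fin 3) ℂ) *
        !![0, I, 0; 0, (1 + I) / 2, 1; -1, 0, 0] = c' • (1 : Matrix (Fin 3) (Fin 3) ℂ) ∧
      (!![0, I, 0; 0, (1 + I) / 2, 1; -1, 0, 0] : Matrix (Fin 3) (Fin 3) ℂ) *
        !![0, 0, 1; I, 0, 0; (1 - I) / 2, -1, 0] = c' • (1 : Matrix (Fin 3) (Fin 3) ℂ)) := by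
  refine ⟨⟨1, one_ne_zero, ?_⟩, ⟨-1, neg_ne_zero.mpr one_ne_zero, ?_, ?_⟩⟩
  · rw [map_one, one_mul]
    exact bind₁_quarticSubst_quarticG I_sq
  · rw [neg_one_smul]
    exact substMatrix_mul_substMatrixInv I_sq
  · rw [neg_one_smul]
    exact substMatrixInv_mul_substMatrix I_sq
end

section
/- The group GL₃(ℤ) is generated by the four matrices A₁ = [[1,1,0],[0,1,0],[0,0,1]], A₂ = [[0,1,0],[−1,0,0],[0,0,1]], A₃ = [[−1,0,0],[0,1,0],[0,0,1]], and A₄ = [[0,0,−1],[1,0,0],[0,1,0]]. -/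
/-!
Left multiplication by elementary transvections `1 + E i j` and by sign changes performs integer
row operations. Working through the columns one at a time, the Euclidean algorithm on the entries
of the current column outside the finished ones leaves a single nonzero entry; it is `±1` because
the matrix is invertible, so it can be moved to the diagonal, normalized, and used to clear the
rest of the column without disturbing the finished columns. Hence these matrices generate
`GL n ℤ`. For `n = 3`, `A₂ A₃` and `A₃ A₄` are permutation matrices, and conjugating `A₁` and
`A₃` by them yields every `1 + E i j` and every sign change.
-/

namespace Matrix

variable {n R : Type*} [Fintype n] [DecidableEq n]

def EqOneOnCols [Zero R] [One R] (S : Finset n) (M : Matrix n n R) : Prop :=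
  ∀ c ∈ S, ∀ i, M i c = (1 : Matrix n n R) i c

namespace EqOneOnCols

variable {S : Finset n}

theorem transvection_mul [CommRing R] {M : Matrix n n R} (hM : EqOneOnCols S M) {i j : n}
    (hj : j ∉ S) (a : R) : EqOneOnCols S (transvection i j a * M) := by
  intro c hc l
  by_cases hl : l = i
  · subst hl
    rw [transvection_mul_apply_same, hM c hc, hM c hc j,
      one_apply_ne (ne_of_mem_of_not_mem hc hj).symm, mul_zero, add_zero]
  · rw [transvection_mul_apply_of_ne _ _ _ _ hl, hM c hc]

theorem diagonal_mul [Semiring R] {M : Matrix n n R} (hM : EqOneOnCols S M) {d : n → R}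
    (hd : ∀ c ∈ S, d c = 1) : EqOneOnCols S (diagonal d * M) := by
  intro c hc l
  rw [Matrix.diagonal_mul, hM c hc]
  by_cases hl : l = c
  · rw [hl, hd c hc, one_mul]
  · rw [one_apply_ne hl, mul_zero]

/-- Row `k` of `g⁻¹` vanishes on `S`, so `(g⁻¹ * g) k k = 1` is a combination of the
entries `g i k` with `i ∉ S`. -/
theorem isUnit_of_forall_dvd [CommSemiring R] {g : GL n R}
    (hg : EqOneOnCols S (g : Matrix n n R)) {k : n} (hk : k ∉ S) {d : R}
    (hd : ∀ i ∉ S, d ∣ (g : Matrix n n R) i k) : IsUnit d := by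
  set u := ((g⁻¹ : GL n R) : Matrix n n R)
  have hu : ∀ c ∈ S, u k c = 0 := by
    intro c hc
    have hcol : (u * g) k c = (u * (1 : Matrix n n R)) k c := by simp only [mul_apply, hg c hc]
    rwa [mul_one, ← Units.val_mul, inv_mul_cancel, Units.val_one,
      one_apply_ne (ne_of_mem_of_not_mem hc hk).symm, eq_comm] at hcol
  have hsum : ∑ i, u k i * (g : Matrix n n R) i k = 1 := by
    rw [← mul_apply, ← Units.val_mul, inv_mul_cancel, Units.val_one, one_apply_eq]
  refine isUnit_of_dvd_one (hsum ▸ Finset.dvd_sum fun i (_ : i ∈ Finset.univ) => ?_)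
  by_cases hi : i ∈ S
  · rw [hu i hi, zero_mul]
    exact dvd_zero d
  · exact Dvd.dvd.mul_left (hd i hi) _

end EqOneOnCols

end Matrix

namespace Matrix.GeneralLinearGroup

variable {n R : Type*} [Fintype n] [DecidableEq n]

theorem coe_zpow_of_coe_eq_transvection [CommRing R] {i j : n} (hij : i ≠ j) {t : GL n R}
    (ht : (t : Matrix n n R) = transvection i j 1) (a : ℤ) :
    ((t ^ a : GL n R) : Matrix n n R) = transvection i j (a : R) := by
  have ht_inv : ((t⁻¹ : GL n R) : Matrix n n R) = transvection i j (-1) :=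
    Units.inv_eq_of_mul_eq_one_right <| by
      rw [ht, transvection_mul_transvection_same _ _ hij, add_neg_cancel, transvection_zero]
  induction a using Int.induction_on with
  | zero => simp [transvection_zero]
  | succ m ih =>
    rw [_root_.zpow_add_one, Units.val_mul, ih, ht, transvection_mul_transvection_same _ _ hij]
    push_cast; rfl
  | pred m ih =>
    rw [_root_.zpow_sub_one, Units.val_mul, ih, ht_inv,
      transvection_mul_transvection_same _ _ hij]
    push_cast; rw [sub_eq_add_neg]

variable {H : Subgroup (GL n ℤ)} {S : Finset n} {k : n}

theorem exists_mem_coe_eq_transvection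
    (hT : ∀ i j, i ≠ j → ∃ t ∈ H, (t : Matrix n n ℤ) = transvection i j 1)
    {i j : n} (hij : i ≠ j) (a : ℤ) : ∃ t ∈ H, (t : Matrix n n ℤ) = transvection i j a := by
  obtain ⟨t, htH, ht⟩ := hT i j hij
  exact ⟨t ^ a, zpow_mem htH a, by rw [coe_zpow_of_coe_eq_transvection hij ht, Int.cast_id]⟩

theorem exists_mem_sum_natAbs_col_lt
    (hT : ∀ i j, i ≠ j → ∃ t ∈ H, (t : Matrix n n ℤ) = transvection i j 1)
    {g : GL n ℤ} (hg : EqOneOnCols S (g : Matrix n n ℤ)) {i j : n} (hij : i ≠ j) (hj : j ∉ S)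
    (hj0 : (g : Matrix n n ℤ) j k ≠ 0)
    (hle : ((g : Matrix n n ℤ) j k).natAbs ≤ ((g : Matrix n n ℤ) i k).natAbs) :
    ∃ h ∈ H, EqOneOnCols S ((h * g : GL n ℤ) : Matrix n n ℤ) ∧
      ∑ l, (((h * g : GL n ℤ) : Matrix n n ℤ) l k).natAbs
        < ∑ l, ((g : Matrix n n ℤ) l k).natAbs := by
  set a := (g : Matrix n n ℤ) i k
  set b := (g : Matrix n n ℤ) j k
  obtain ⟨t, htH, ht⟩ := exists_mem_coe_eq_transvection hT hij (-(a / b))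
  have hrem : (transvection i j (-(a / b)) * g) i k = a % b := by
    rw [transvection_mul_apply_same, Int.emod_def]; ring
  have hlt : (a % b).natAbs < a.natAbs := by
    have hb : ((a % b).natAbs : ℤ) < b.natAbs := by
      rw [Int.natAbs_of_nonneg (Int.emod_nonneg a hj0), Int.natCast_natAbs]
      exact Int.emod_lt_abs a hj0
    omega
  refine ⟨t, htH, ?_, ?_⟩
  · rw [Units.val_mul, ht]
    exact hg.transvection_mul hj _
  · rw [Units.val_mul, ht]
    refine Finset.sum_lt_sum (fun l _ => ?_) ⟨i, Finset.mem_univ _, hrem ▸ hlt⟩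
    by_cases hl : l = i
    · rw [hl, hrem]; exact hlt.le
    · rw [transvection_mul_apply_of_ne _ _ _ _ hl]

theorem exists_pivot_of_forall_natAbs_lt {g : GL n ℤ} (hg : EqOneOnCols S (g : Matrix n n ℤ))
    (hk : k ∉ S)
    (hlt_col : ∀ i j, i ≠ j → j ∉ S → (g : Matrix n n ℤ) j k ≠ 0 →
      ((g : Matrix n n ℤ) i k).natAbs < ((g : Matrix n n ℤ) j k).natAbs) :
    ∃ r ∉ S, IsUnit ((g : Matrix n n ℤ) r k) ∧ ∀ i ≠ r, (g : Matrix n n ℤ) i k = 0 := by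
  obtain ⟨r, hr, hr0⟩ : ∃ r ∉ S, (g : Matrix n n ℤ) r k ≠ 0 := by
    by_contra! h
    exact not_isUnit_zero (hg.isUnit_of_forall_dvd hk fun i hi => by rw [h i hi])
  have hout : ∀ i ∉ S, i ≠ r → (g : Matrix n n ℤ) i k = 0 := by
    intro i hi hir
    by_contra hi0
    exact (hlt_col i r hir hr hr0).not_gt (hlt_col r i hir.symm hi hi0)
  have hunit : IsUnit ((g : Matrix n n ℤ) r k) := by
    refine hg.isUnit_of_forall_dvd hk fun i hi => ?_
    by_cases hir : i = r
    · rw [hir]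
    · rw [hout i hi hir]; exact dvd_zero _
  refine ⟨r, hr, hunit, fun i hir => ?_⟩
  by_cases hi : i ∈ S
  · have := hlt_col i r hir hr hr0
    rw [Int.isUnit_iff_natAbs_eq.mp hunit] at this
    omega
  · exact hout i hi hir

theorem exists_mem_col_eq_single_of_pivot
    (hT : ∀ i j, i ≠ j → ∃ t ∈ H, (t : Matrix n n ℤ) = transvection i j 1)
    {g : GL n ℤ} (hg : EqOneOnCols S (g : Matrix n n ℤ)) (hk : k ∉ S) {r : n} (hr : r ∉ S)
    (hcol : ∀ i ≠ r, (g : Matrix n n ℤ) i k = 0) :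
    ∃ h ∈ H, EqOneOnCols S ((h * g : GL n ℤ) : Matrix n n ℤ) ∧
      ((h * g : GL n ℤ) : Matrix n n ℤ) k k = (g : Matrix n n ℤ) r k ∧
      ∀ i ≠ k, ((h * g : GL n ℤ) : Matrix n n ℤ) i k = 0 := by
  by_cases hrk : r = k
  · subst hrk
    exact ⟨1, H.one_mem, by rwa [one_mul], by rw [one_mul], by rwa [one_mul]⟩
  obtain ⟨t₁, ht₁H, ht₁⟩ := exists_mem_coe_eq_transvection hT (Ne.symm hrk) 1
  obtain ⟨t₂, ht₂H, ht₂⟩ := exists_mem_coe_eq_transvection hT hrk (-1)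
  refine ⟨t₂ * t₁, mul_mem ht₂H ht₁H, ?_, ?_, fun i hik => ?_⟩ <;>
    rw [Units.val_mul, Units.val_mul, ht₁, ht₂, Matrix.mul_assoc]
  · exact (hg.transvection_mul hr _).transvection_mul hk _
  · rw [transvection_mul_apply_of_ne _ _ _ _ (Ne.symm hrk), transvection_mul_apply_same,
      hcol k (Ne.symm hrk), zero_add, one_mul]
  · by_cases hir : i = r
    · rw [hir, transvection_mul_apply_same, transvection_mul_apply_same,
        transvection_mul_apply_of_ne _ _ _ _ hrk, hcol k (Ne.symm hrk)]
      ring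
    · rw [transvection_mul_apply_of_ne _ _ _ _ hir, transvection_mul_apply_of_ne _ _ _ _ hik,
        hcol i hir]

theorem exists_mem_eqOneOnCols_insert_of_col_eq_single
    (hD : ∀ k, ∃ d ∈ H, (d : Matrix n n ℤ) = diagonal (Function.update 1 k (-1)))
    {g : GL n ℤ} (hg : EqOneOnCols S (g : Matrix n n ℤ)) (hk : k ∉ S)
    (hunit : IsUnit ((g : Matrix n n ℤ) k k)) (hcol : ∀ i ≠ k, (g : Matrix n n ℤ) i k = 0) :
    ∃ h ∈ H, EqOneOnCols (insert k S) ((h * g : GL n ℤ) : Matrix n n ℤ) := by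
  rcases Int.isUnit_iff.mp hunit with hkk | hkk
  · refine ⟨1, H.one_mem, ?_⟩
    rw [one_mul]
    refine (Finset.forall_mem_insert _ _ _).mpr ⟨fun i => ?_, hg⟩
    by_cases hik : i = k
    · rw [hik, hkk, one_apply_eq]
    · rw [hcol i hik, one_apply_ne hik]
  · obtain ⟨d, hdH, hd⟩ := hD k
    refine ⟨d, hdH, ?_⟩
    rw [Units.val_mul, hd]
    refine (Finset.forall_mem_insert _ _ _).mpr ⟨fun i => ?_, hg.diagonal_mul fun c hc => ?_⟩
    · rw [Matrix.diagonal_mul]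
      by_cases hik : i = k
      · rw [hik, hkk, Function.update_self, one_apply_eq]; norm_num
      · rw [hcol i hik, one_apply_ne hik, mul_zero]
    · rw [Function.update_of_ne (ne_of_mem_of_not_mem hc hk), Pi.one_apply]

theorem exists_mem_eqOneOnCols_insert
    (hT : ∀ i j, i ≠ j → ∃ t ∈ H, (t : Matrix n n ℤ) = transvection i j 1)
    (hD : ∀ k, ∃ d ∈ H, (d : Matrix n n ℤ) = diagonal (Function.update 1 k (-1)))
    (hk : k ∉ S) (g : GL n ℤ) (hg : EqOneOnCols S (g : Matrix n n ℤ)) :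
    ∃ h ∈ H, EqOneOnCols (insert k S) ((h * g : GL n ℤ) : Matrix n n ℤ) := by
  induction hN : ∑ i, ((g : Matrix n n ℤ) i k).natAbs using Nat.strong_induction_on
    generalizing g with
  | _ N ih =>
  by_cases hred : ∃ i j, i ≠ j ∧ j ∉ S ∧ (g : Matrix n n ℤ) j k ≠ 0 ∧
      ((g : Matrix n n ℤ) j k).natAbs ≤ ((g : Matrix n n ℤ) i k).natAbs
  · obtain ⟨i, j, hij, hj, hj0, hle⟩ := hred
    obtain ⟨h₁, hh₁, hg₁, hlt⟩ := exists_mem_sum_natAbs_col_lt hT hg hij hj hj0 hle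
    obtain ⟨h₂, hh₂, hg₂⟩ := ih _ (hN ▸ hlt) (h₁ * g) hg₁ rfl
    exact ⟨h₂ * h₁, mul_mem hh₂ hh₁, by rwa [mul_assoc]⟩
  · push Not at hred
    obtain ⟨r, hr, hunit, hcol⟩ := exists_pivot_of_forall_natAbs_lt hg hk hred
    obtain ⟨h₁, hh₁, hg₁, hkk, hcol₁⟩ := exists_mem_col_eq_single_of_pivot hT hg hk hr hcol
    obtain ⟨h₂, hh₂, hg₂⟩ :=
      exists_mem_eqOneOnCols_insert_of_col_eq_single hD hg₁ hk (hkk ▸ hunit) hcol₁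
    exact ⟨h₂ * h₁, mul_mem hh₂ hh₁, by rwa [mul_assoc]⟩

theorem eq_top_of_transvection_mem_of_diagonal_mem
    (hT : ∀ i j, i ≠ j → ∃ t ∈ H, (t : Matrix n n ℤ) = transvection i j 1)
    (hD : ∀ k, ∃ d ∈ H, (d : Matrix n n ℤ) = diagonal (Function.update 1 k (-1))) :
    H = ⊤ := by
  refine (Subgroup.eq_top_iff' H).mpr fun g => ?_
  have hcols : ∀ S : Finset n, ∃ h ∈ H, EqOneOnCols S ((h * g : GL n ℤ) : Matrix n n ℤ) := by
    intro S
    induction S using Finset.induction_on with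
    | empty => exact ⟨1, H.one_mem, fun c hc => absurd hc (Finset.notMem_empty c)⟩
    | insert k S hk ih =>
      obtain ⟨h₁, hh₁, hg₁⟩ := ih
      obtain ⟨h₂, hh₂, hg₂⟩ := exists_mem_eqOneOnCols_insert hT hD hk (h₁ * g) hg₁
      exact ⟨h₂ * h₁, mul_mem hh₂ hh₁, by rwa [mul_assoc]⟩
  obtain ⟨h, hh, hg⟩ := hcols Finset.univ
  have hhg : h * g = 1 := Units.ext (Matrix.ext fun i c => hg c (Finset.mem_univ c) i)
  rw [eq_inv_of_mul_eq_one_right hhg]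
  exact inv_mem hh

end Matrix.GeneralLinearGroup

/-- `GL₃(ℤ)` is generated by the four matrices
`A₁ = [[1,1,0],[0,1,0],[0,0,1]]`, `A₂ = [[0,1,0],[−1,0,0],[0,0,1]]`,
`A₃ = [[−1,0,0],[0,1,0],[0,0,1]]`, `A₄ = [[0,0,−1],[1,0,0],[0,1,0]]`. -/
theorem stmt_12 (A1 A2 A3 A4 : GL (Fin 3) ℤ)
    (h1 : (A1 : Matrix (Fin 3) (Fin 3) ℤ) = !![1, 1, 0; 0, 1, 0; 0, 0, 1])
    (h2 : (A2 : Matrix (Fin 3) (Fin 3) ℤ) = !![0, 1, 0; -1, 0, 0; 0, 0, 1])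
    (h3 : (A3 : Matrix (Fin 3) (Fin 3) ℤ) = !![-1, 0, 0; 0, 1, 0; 0, 0, 1])
    (h4 : (A4 : Matrix (Fin 3) (Fin 3) ℤ) = !![0, 0, -1; 1, 0, 0; 0, 1, 0]) :
    Subgroup.closure {A1, A2, A3, A4} = (⊤ : Subgroup (GL (Fin 3) ℤ)) := by
  set H := Subgroup.closure {A1, A2, A3, A4}
  have mem : ∀ A ∈ ({A1, A2, A3, A4} : Set (GL (Fin 3) ℤ)), A ∈ H :=
    fun _ hA => Subgroup.subset_closure hA
  have m1 : A1 ∈ H := mem A1 (by simp)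
  have m3 : A3 ∈ H := mem A3 (by simp)
  obtain ⟨P, hPH, hP⟩ : ∃ P ∈ H, (P : Matrix (Fin 3) (Fin 3) ℤ) = !![0, 1, 0; 1, 0, 0; 0, 0, 1] :=
    ⟨A2 * A3, mul_mem (mem A2 (by simp)) m3, by rw [Units.val_mul, h2, h3]; decide⟩
  obtain ⟨C, hCH, hC⟩ : ∃ C ∈ H, (C : Matrix (Fin 3) (Fin 3) ℤ) = !![0, 0, 1; 1, 0, 0; 0, 1, 0] :=
    ⟨A3 * A4, mul_mem m3 (mem A4 (by simp)), by rw [Units.val_mul, h3, h4]; decide⟩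
  refine Matrix.GeneralLinearGroup.eq_top_of_transvection_mem_of_diagonal_mem
    (fun i j hij => ?_) (fun k => ?_)
  · fin_cases i <;> fin_cases j <;> try exact absurd rfl hij
    exacts [⟨A1, m1, by rw [h1]; decide⟩,
      ⟨C * C * P * A1 * P * C, by (repeat' apply mul_mem) <;> assumption,
        by simp only [Units.val_mul, h1, hP, hC]; decide⟩,
      ⟨P * A1 * P, by (repeat' apply mul_mem) <;> assumption,
        by simp only [Units.val_mul, h1, hP]; decide⟩,
      ⟨C * A1 * C * C, by (repeat' apply mul_mem) <;> assumption,
        by simp only [Units.val_mul, h1, hC]; decide⟩,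
      ⟨C * C * A1 * C, by (repeat' apply mul_mem) <;> assumption,
        by simp only [Units.val_mul, h1, hC]; decide⟩,
      ⟨C * P * A1 * P * C * C, by (repeat' apply mul_mem) <;> assumption,
        by simp only [Units.val_mul, h1, hP, hC]; decide⟩]
  · fin_cases k
    exacts [⟨A3, m3, by rw [h3]; decide⟩,
      ⟨P * A3 * P, by (repeat' apply mul_mem) <;> assumption,
        by simp only [Units.val_mul, h3, hP]; decide⟩,
      ⟨C * P * A3 * P * C * C, by (repeat' apply mul_mem) <;> assumption,
        by simp only [Units.val_mul, h3, hP, hC]; decide⟩]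
end
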